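/- arXiv:1902.03266 — 9 statements merged into one kernel-verified Lean document; each statement's English description precedes it below -/
import Mathlib

section
/- Fix a finite set X and a function v : X → ℝ. Define a CDM parameter u on X by u_{xz} = −v(z) for all distinct x, z ∈ X. Then for every subset C ⊆ X with |C| ≥ 2 and every x ∈ C, P_u(x|C) = exp(v(x)) / Σ_{y∈C} exp(v(y)). In particular, every multinomial logit (Luce) model on X is realized by a CDM parameter. -/
/-- The CDM choice probability: `P_u(x|C) = exp(∑_{z∈C, z≠x} u x z) / ∑_{y∈C} exp(∑_{z∈C, z≠y} u y z)`. -/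
noncomputable def cdmProb {α : Type*} [DecidableEq α] (u : α → α → ℝ) (C : Finset α) (x : α) : ℝ :=
  Real.exp (∑ z ∈ C.erase x, u x z) / ∑ y ∈ C, Real.exp (∑ z ∈ C.erase y, u y z)

/-- **The Luce (multinomial logit) model is nested in the CDM.**  Given utilities
`v : α → ℝ`, the CDM parameter `u x z = -v z` (for distinct `x, z`) reproduces the Luce
choice probabilities `exp(v x) / ∑_{y∈C} exp(v y)` on every choice set of size at least
two. -/
theorem luce_nested_in_cdm {α : Type*} [Fintype α] [DecidableEq α]
    (v : α → ℝ) (u : α → α → ℝ)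
    (hu : ∀ x z : α, x ≠ z → u x z = -v z) :
    ∀ C : Finset α, 2 ≤ C.card → ∀ x ∈ C,
      cdmProb u C x = Real.exp (v x) / ∑ y ∈ C, Real.exp (v y) := by
  intro C hC x hx
  have key : ∀ y ∈ C, ∑ z ∈ C.erase y, u y z = v y - ∑ z ∈ C, v z := by
    intro y hy
    have h1 : ∑ z ∈ C.erase y, u y z = ∑ z ∈ C.erase y, (-v z) := by
      apply Finset.sum_congr rfl
      intro z hz
      exact hu y z (Finset.ne_of_mem_erase hz).symm
    rw [h1, Finset.sum_neg_distrib, Finset.sum_erase_eq_sub hy]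
    ring
  unfold cdmProb
  rw [key x hx]
  have h2 : ∀ y ∈ C, Real.exp (∑ z ∈ C.erase y, u y z)
      = Real.exp (v y) * Real.exp (-(∑ z ∈ C, v z)) := by
    intro y hy
    rw [key y hy, ← Real.exp_add]
    ring_nf
  rw [Finset.sum_congr rfl h2, ← Finset.sum_mul, sub_eq_add_neg, Real.exp_add]
  have hpos : (0:ℝ) < ∑ y ∈ C, Real.exp (v y) := by
    apply Finset.sum_pos (fun y _ => Real.exp_pos _)
    exact Finset.card_pos.mp (by omega)
  field_simp
end

section
/- Fix a finite set X with n = |X| ≥ 2. Let u be a CDM parameter on X satisfying Σ_{x∈X} Σ_{y∈X, y≠x} u_{xy} = 0. Define v(z) = −(1/(n−1)) Σ_{x∈X, x≠z} u_{xz} for each z ∈ X, and v(x|{z}) = u_{xz} − (1/(n−1)) Σ_{y∈X, y≠z} u_{yz} for each pair of distinct x, z ∈ X. Then: (i) Σ_{z∈X} v(z) = 0; (ii) Σ_{x∈X, x≠z} v(x|{z}) = 0 for every z ∈ X; and (iii) for every subset C ⊆ X with |C| ≥ 2 and every x ∈ C, exp(v(x) + Σ_{z∈C, z≠x} v(x|{z}))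 / Σ_{y∈C} exp(v(y) + Σ_{z∈C, z≠y} v(y|{z})) = P_u(x|C). -/
/-! Write `S z = ∑_{x ≠ z} u x z` for the column sums of `u` and `c = 1/(n-1)`, so that
`v z = -c S z` and `w x z = u x z - c S z`. Then (i) holds because `∑_z S z` is the
total sum of `u`, and (ii) says that deviations from the mean of column `z` sum to zero.
For (iii), the `M₂` utility of `y` in `C` is `∑_{z ∈ C, z ≠ y} u y z - c ∑_{z ∈ C} S z`:
it differs from the CDM utility by a shift independent of `y`, which the softmax ignores. -/

open Finset Real

theorem Finset.sum_sum_erase_comm {ι M : Type*} [DecidableEq ι] [AddCommMonoid M]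
    (s : Finset ι) (f : ι → ι → M) :
    ∑ x ∈ s, ∑ y ∈ s.erase x, f x y = ∑ y ∈ s, ∑ x ∈ s.erase y, f x y :=
  sum_comm' fun x y => by simp only [mem_erase]; tauto

theorem Finset.sum_sub_one_div_card_mul_sum {ι K : Type*} [Field K] [CharZero K]
    (s : Finset ι) (f : ι → K) :
    ∑ x ∈ s, (f x - 1 / #s * ∑ y ∈ s, f y) = 0 := by
  rcases s.eq_empty_or_nonempty with rfl | hs
  · exact sum_empty
  · rw [sum_sub_distrib, sum_const, nsmul_eq_mul, ← mul_assoc,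
      mul_one_div_cancel (Nat.cast_ne_zero.mpr hs.card_ne_zero), one_mul, sub_self]

theorem Real.exp_div_sum_exp_of_eq_add_const {ι : Type*} {C : Finset ι} {f g : ι → ℝ} {k : ℝ}
    (h : ∀ y ∈ C, f y = g y + k) {x : ι} (hx : x ∈ C) :
    exp (f x) / ∑ y ∈ C, exp (f y) = exp (g x) / ∑ y ∈ C, exp (g y) := by
  rw [h x hx, sum_congr rfl fun y hy => by rw [h y hy]]
  simp only [exp_add, ← sum_mul]
  exact mul_div_mul_right _ _ (exp_ne_zero k)

theorem cdm_reparameterization_valid_general {α : Type*} [Fintype α] [DecidableEq α]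
    (u : α → α → ℝ)
    (hsum : ∑ x : α, ∑ y ∈ Finset.univ.erase x, u x y = 0)
    (v : α → ℝ)
    (hv : ∀ z : α, v z = -(1 / ((Fintype.card α : ℝ) - 1)) * ∑ x ∈ Finset.univ.erase z, u x z)
    (w : α → α → ℝ)
    (hw : ∀ x z : α, x ≠ z →
      w x z = u x z - (1 / ((Fintype.card α : ℝ) - 1)) * ∑ y ∈ Finset.univ.erase z, u y z) :
    (∑ z : α, v z = 0) ∧
    (∀ z : α, ∑ x ∈ Finset.univ.erase z, w x z = 0) ∧
    (∀ C : Finset α, 2 ≤ C.card → ∀ x ∈ C,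
      Real.exp (v x + ∑ z ∈ C.erase x, w x z) /
        (∑ y ∈ C, Real.exp (v y + ∑ z ∈ C.erase y, w y z)) = cdmProb u C x) := by
  refine ⟨?_, fun z => ?_, fun C _ x hx => ?_⟩
  · simp only [hv, ← mul_sum]
    rw [← sum_sum_erase_comm, hsum, mul_zero]
  · have hcard : (#(univ.erase z) : ℝ) = Fintype.card α - 1 := by
      rw [cast_card_erase_of_mem (mem_univ z), card_univ]
    rw [sum_congr rfl fun x hx => hw x z (ne_of_mem_erase hx), ← hcard]
    exact sum_sub_one_div_card_mul_sum _ _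
  · set S : α → ℝ := fun z => ∑ x ∈ univ.erase z, u x z
    have hshift : ∀ y ∈ C, v y + ∑ z ∈ C.erase y, w y z
        = ∑ z ∈ C.erase y, u y z + -(1 / ((Fintype.card α : ℝ) - 1) * ∑ z ∈ C, S z) := by
      intro y hy
      rw [sum_congr rfl fun z hz => hw y z (ne_of_mem_erase hz).symm, sum_sub_distrib, hv,
        ← mul_sum, ← add_sum_erase C S hy]
      ring
    exact exp_div_sum_exp_of_eq_add_const hshift hx

/-- **Validity of the paper's reparameterization of the second-order model `M₂`.**
Let `u` be a CDM parameter with `∑_{x} ∑_{y≠x} u x y = 0`.  Define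
`v z = -(1/(n-1)) ∑_{x≠z} u x z` and `w x z = u x z - (1/(n-1)) ∑_{y≠z} u y z`
(for distinct `x, z`, where `w x z` plays the role of `v(x∣{z})`).  Then
(i) `∑_z v z = 0`, (ii) `∑_{x≠z} w x z = 0` for every `z`, and (iii) the `M₂`
probabilities built from `v` and `w` coincide with the CDM probabilities of `u` on every
choice set of size at least two. -/
theorem cdm_reparameterization_valid {α : Type*} [Fintype α] [DecidableEq α]
    (hn : 2 ≤ Fintype.card α)
    (u : α → α → ℝ)
    (hsum : ∑ x : α, ∑ y ∈ Finset.univ.erase x, u x y = 0)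
    (v : α → ℝ)
    (hv : ∀ z : α, v z = -(1 / ((Fintype.card α : ℝ) - 1)) * ∑ x ∈ Finset.univ.erase z, u x z)
    (w : α → α → ℝ)
    (hw : ∀ x z : α, x ≠ z →
      w x z = u x z - (1 / ((Fintype.card α : ℝ) - 1)) * ∑ y ∈ Finset.univ.erase z, u y z) :
    (∑ z : α, v z = 0) ∧
    (∀ z : α, ∑ x ∈ Finset.univ.erase z, w x z = 0) ∧
    (∀ C : Finset α, 2 ≤ C.card → ∀ x ∈ C,
      Real.exp (v x + ∑ z ∈ C.erase x, w x z) /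
        (∑ y ∈ C, Real.exp (v y + ∑ z ∈ C.erase y, w y z)) = cdmProb u C x) :=
  cdm_reparameterization_valid_general u hsum v hv w hw
end

section
/- Fix a finite set X with n = |X| ≥ 2. Let u and u' be CDM parameters on X, both satisfying the offset constraint Σ_{x∈X} exp(Σ_{z∈X, z≠x} u_{xz}) = 1 (respectively with u'). Suppose that u_{xy} − u_{yx} = u'_{xy} − u'_{yx} for all distinct x, y ∈ X, and u_{xz} − u_{yz} = u'_{xz} − u'_{yz} for all pairwise distinct x, y, z ∈ X. Then u = u', i.e., u_{xy} = u'_{xy} for all distinct x, y ∈ X. -/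
/-- **Fact 2 of the paper.**  Let `u` and `u'` be CDM parameters on a finite universe
with at least two elements, both satisfying the offset constraint
`∑_{x} exp(∑_{z≠x} u x z) = 1`.  If the parameter differences `u x y - u y x` (for all
distinct `x, y`) and `u x z - u y z` (for all pairwise distinct `x, y, z`) agree for `u`
and `u'`, then `u x y = u' x y` for all distinct `x, y`. -/
theorem cdm_differences_determine_parameters {α : Type*} [Fintype α] [DecidableEq α]
    (hn : 2 ≤ Fintype.card α)
    (u u' : α → α → ℝ)
    (hoff : ∑ x : α, Real.exp (∑ z ∈ Finset.univ.erase x, u x z) = 1)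
    (hoff' : ∑ x : α, Real.exp (∑ z ∈ Finset.univ.erase x, u' x z) = 1)
    (hd1 : ∀ x y : α, x ≠ y → u x y - u y x = u' x y - u' y x)
    (hd2 : ∀ x y z : α, x ≠ y → y ≠ z → x ≠ z → u x z - u y z = u' x z - u' y z) :
    ∀ x y : α, x ≠ y → u x y = u' x y := by
  obtain ⟨p, q, hpq⟩ := Fintype.exists_pair_of_one_lt_card hn
  have hdsym : ∀ x y, x ≠ y → u x y - u' x y = u y x - u' y x := by
    intro x y h; have := hd1 x y h; linarith
  have hdfst : ∀ x y z, x ≠ y → y ≠ z → x ≠ z → u x z - u' x z = u y z - u' y z := by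
    intro x y z h1 h2 h3; have := hd2 x y z h1 h2 h3; linarith
  have hconst : ∀ x y a b, x ≠ y → a ≠ b → u x y - u' x y = u a b - u' a b := by
    intro x y a b hxy hab
    by_cases hyb : y = b
    · subst hyb
      by_cases hxa : x = a
      · subst hxa; rfl
      · exact hdfst x a y hxa hab hxy
    · by_cases hxb : x = b
      · subst hxb
        have h1 := hdsym x y hxy
        by_cases hya : y = a
        · subst hya; linarith
        · have h2 := hdfst y a x hya hab hyb
          linarith
      · have h1 := hdfst x b y hxb (fun h => hyb h.symm) hxy
        have h2 := hdsym b y (fun h => hyb h.symm)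
        by_cases hya : y = a
        · subst hya; linarith
        · have h3 := hdfst y a b hya hab hyb
          linarith
  set c : ℝ := u p q - u' p q with hc
  have hcardpos : 1 ≤ Fintype.card α := le_trans (by norm_num) hn
  have hS : ∀ x : α, ∑ z ∈ Finset.univ.erase x, u x z
      = ∑ z ∈ Finset.univ.erase x, u' x z + ((Fintype.card α : ℝ) - 1) * c := by
    intro x
    have h1 : ∑ z ∈ Finset.univ.erase x, (u x z - u' x z)
        = ∑ z ∈ Finset.univ.erase x, c := by
      refine Finset.sum_congr rfl ?_
      intro z hz
      exact hconst x z p q (Finset.ne_of_mem_erase hz).symm hpq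
    rw [Finset.sum_sub_distrib, Finset.sum_const,
      Finset.card_erase_of_mem (Finset.mem_univ x), Finset.card_univ,
      nsmul_eq_mul, Nat.cast_sub hcardpos, Nat.cast_one] at h1
    linarith
  have hexp : ∑ x : α, Real.exp (∑ z ∈ Finset.univ.erase x, u x z)
      = Real.exp (((Fintype.card α : ℝ) - 1) * c)
        * ∑ x : α, Real.exp (∑ z ∈ Finset.univ.erase x, u' x z) := by
    rw [Finset.mul_sum]
    refine Finset.sum_congr rfl ?_
    intro x _
    rw [hS x, Real.exp_add]; ring
  rw [hoff', mul_one, hoff] at hexp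
  have hK : ((Fintype.card α : ℝ) - 1) * c = 0 := by
    have h := hexp.symm
    rw [← Real.exp_zero] at h
    have h2 := Real.exp_injective h
    rw [Real.exp_zero] at h2
    linarith
  have hc0 : c = 0 := by
    have hcard2 : (2 : ℝ) ≤ (Fintype.card α : ℝ) := by exact_mod_cast hn
    rcases mul_eq_zero.mp hK with h | h
    · linarith
    · exact h
  intro x y hxy
  have := hconst x y p q hxy hpq
  rw [← hc] at this
  linarith
end

section
/- Fix a finite set X with n = |X|. Let k and k' be integers with 2 ≤ k, k' ≤ n, k ≠ k', and suppose at least one of k, k' lies in {3, 4, …, n−1}. Let u and u' be CDM parameters on X such that P_u(x|C) = P_{u'}(x|C) for every subset C ⊆ X with |C| = k and every x ∈ C, and also for every subset C ⊆ X with |C| = k' and every x ∈ C. Then there exists a constant c ∈ ℝ such that u'_{xz} = u_{xz} + c for all distinct x, z ∈ X. -/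
/-- Combinatorial core: if the "score differences" `∑_{z∈C∖x} d x z` are constant in `x`
over every set of size `m` and size `t`, where `3 ≤ m ≤ n-1`, `2 ≤ t ≤ n`, `m ≠ t`,
then `d` is constant off the diagonal. -/
lemma cdm_aux {α : Type*} [Fintype α] [DecidableEq α]
    (m t : ℕ) (hm3 : 3 ≤ m) (hmn : m + 1 ≤ Fintype.card α)
    (ht2 : 2 ≤ t) (htn : t ≤ Fintype.card α) (hmt : m ≠ t)
    (d : α → α → ℝ)
    (H : ∀ C : Finset α, (C.card = m ∨ C.card = t) → ∀ x ∈ C, ∀ y ∈ C,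
      ∑ z ∈ C.erase x, d x z = ∑ z ∈ C.erase y, d y z) :
    ∃ c : ℝ, ∀ x z : α, x ≠ z → d x z = c := by
  -- L1: the basic relation on a set {x, y} ∪ S.
  have L1 : ∀ s : ℕ, (s = m ∨ s = t) → ∀ x y : α, x ≠ y →
      ∀ S : Finset α, x ∉ S → y ∉ S → S.card + 2 = s →
      d x y + ∑ z ∈ S, d x z = d y x + ∑ z ∈ S, d y z := by
    intro s hs x y hxy S hxS hyS hcard
    have hx' : x ∉ insert y S := by simp [Finset.mem_insert, hxy, hxS]
    have hy' : y ∉ insert x S := by simp [Finset.mem_insert, Ne.symm hxy, hyS]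
    have hxC : x ∈ insert x (insert y S) := Finset.mem_insert_self _ _
    have hyC : y ∈ insert x (insert y S) :=
      Finset.mem_insert_of_mem (Finset.mem_insert_self _ _)
    have hC : (insert x (insert y S)).card = m ∨ (insert x (insert y S)).card = t := by
      have : (insert x (insert y S)).card = s := by
        rw [Finset.card_insert_of_notMem hx', Finset.card_insert_of_notMem hyS]; omega
      rcases hs with h | h
      · left; omega
      · right; omega
    have key := H (insert x (insert y S)) hC x hxC y hyC
    rw [Finset.erase_insert hx'] at key
    rw [Finset.insert_comm, Finset.erase_insert hy'] at key
    rwa [Finset.sum_insert hyS, Finset.sum_insert hxS] at key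
  -- existence of sets of prescribed size avoiding some points
  have exists_avoid : ∀ (A : Finset α) (r : ℕ), A.card + r ≤ Fintype.card α →
      ∃ S : Finset α, (∀ a ∈ A, a ∉ S) ∧ S.card = r := by
    intro A r hr
    obtain ⟨S, hS, hcard⟩ := Finset.exists_subset_card_eq (s := Aᶜ) (n := r) (by
      rw [Finset.card_compl]; omega)
    exact ⟨S, fun a ha hmem => (Finset.mem_compl.mp (hS hmem)) ha, hcard⟩
  -- L2: d x z - d y z is independent of z ∉ {x,y} (using the middle size m).
  have L2 : ∀ x y z z' : α, x ≠ y → z ≠ x → z ≠ y → z' ≠ x → z' ≠ y → z ≠ z' →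
      d x z - d y z = d x z' - d y z' := by
    intro x y z z' hxy hzx hzy hz'x hz'y hzz'
    have h4 : ({x, y, z, z'} : Finset α).card ≤ 4 := by
      apply (Finset.card_insert_le _ _).trans
      apply Nat.succ_le_succ
      apply (Finset.card_insert_le _ _).trans
      apply Nat.succ_le_succ
      apply (Finset.card_insert_le _ _).trans
      simp
    obtain ⟨S, hav, hcard⟩ := exists_avoid {x, y, z, z'} (m - 3) (by omega)
    have hxS : x ∉ S := hav x (by simp)
    have hyS : y ∉ S := hav y (by simp)
    have hzS : z ∉ S := hav z (by simp)
    have hz'S : z' ∉ S := hav z' (by simp)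
    have e1 := L1 m (Or.inl rfl) x y hxy (insert z S)
      (by simp [Finset.mem_insert, Ne.symm hzx, hxS])
      (by simp [Finset.mem_insert, Ne.symm hzy, hyS])
      (by rw [Finset.card_insert_of_notMem hzS]; omega)
    have e2 := L1 m (Or.inl rfl) x y hxy (insert z' S)
      (by simp [Finset.mem_insert, Ne.symm hz'x, hxS])
      (by simp [Finset.mem_insert, Ne.symm hz'y, hyS])
      (by rw [Finset.card_insert_of_notMem hz'S]; omega)
    rw [Finset.sum_insert hzS, Finset.sum_insert hzS] at e1
    rw [Finset.sum_insert hz'S, Finset.sum_insert hz'S] at e2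
    linarith
  -- L3: for any x ≠ y, the column equality and the symmetry.
  have L3 : ∀ x y : α, x ≠ y → (∀ z, z ≠ x → z ≠ y → d x z = d y z) ∧ d x y = d y x := by
    intro x y hxy
    have h2 : ({x, y} : Finset α).card ≤ 2 := by
      apply (Finset.card_insert_le _ _).trans
      simp
    obtain ⟨T, havT, hcardT⟩ := exists_avoid {x, y} 1 (by omega)
    obtain ⟨z₀, hz₀⟩ := Finset.card_eq_one.mp hcardT
    have hz₀x : z₀ ≠ x := by
      intro hh; exact havT x (by simp) (by rw [hz₀, ← hh]; simp)
    have hz₀y : z₀ ≠ y := by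
      intro hh; exact havT y (by simp) (by rw [hz₀, ← hh]; simp)
    have hconst : ∀ z, z ≠ x → z ≠ y → d x z - d y z = d x z₀ - d y z₀ := by
      intro z hzx hzy
      by_cases hz : z = z₀
      · rw [hz]
      · exact L2 x y z z₀ hxy hzx hzy hz₀x hz₀y hz
    have sum_eq : ∀ s : ℕ, (s = m ∨ s = t) →
        (d x y - d y x) + ((s : ℝ) - 2) * (d x z₀ - d y z₀) = 0 := by
      intro s hs
      have hs2 : 2 ≤ s := by rcases hs with rfl | rfl <;> omega
      have hsn : s ≤ Fintype.card α := by rcases hs with rfl | rfl <;> omega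
      obtain ⟨S, hav, hcard⟩ := exists_avoid {x, y} (s - 2) (by omega)
      have hxS : x ∉ S := hav x (by simp)
      have hyS : y ∉ S := hav y (by simp)
      have h1 := L1 s hs x y hxy S hxS hyS (by omega)
      have h2' : ∑ z ∈ S, d x z - ∑ z ∈ S, d y z = (S.card : ℝ) * (d x z₀ - d y z₀) := by
        rw [← Finset.sum_sub_distrib]
        rw [Finset.sum_congr rfl (fun z hz => hconst z
          (fun hh => hxS (hh ▸ hz)) (fun hh => hyS (hh ▸ hz)))]
        rw [Finset.sum_const, nsmul_eq_mul]
      have hScast : (S.card : ℝ) = (s : ℝ) - 2 := by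
        rw [hcard, Nat.cast_sub hs2]; norm_num
      rw [hScast] at h2'
      linarith
    have e1 := sum_eq m (Or.inl rfl)
    have e2 := sum_eq t (Or.inr rfl)
    have hmt' : (m : ℝ) ≠ (t : ℝ) := by exact_mod_cast hmt
    have hg : d x z₀ - d y z₀ = 0 := by
      have hmul : ((m : ℝ) - (t : ℝ)) * (d x z₀ - d y z₀) = 0 := by linarith
      rcases mul_eq_zero.mp hmul with h | h
      · exact absurd (by linarith : (m : ℝ) = (t : ℝ)) hmt'
      · exact h
    have ha : d x y - d y x = 0 := by
      rw [hg, mul_zero, add_zero] at e1; exact e1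
    refine ⟨fun z hzx hzy => ?_, by linarith⟩
    have := hconst z hzx hzy
    rw [hg] at this
    linarith
  -- conclude: d is constant off the diagonal
  obtain ⟨a, b, hab⟩ := Fintype.exists_pair_of_one_lt_card (by omega : 1 < Fintype.card α)
  refine ⟨d b a, ?_⟩
  have colA : ∀ x, x ≠ a → d x a = d b a := by
    intro x hx
    by_cases hxb : x = b
    · rw [hxb]
    · exact (L3 x b hxb).1 a (Ne.symm hx) hab
  have step : ∀ z, z ≠ a → d a z = d b a := by
    intro z hz
    have hsym := (L3 a z (Ne.symm hz)).2
    rw [hsym]; exact colA z hz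
  intro x z hxz
  by_cases hza : z = a
  · subst hza; exact colA x hxz
  · by_cases hxa : x = a
    · rw [hxa]; exact step z hza
    · have : d x z = d a z := (L3 x a hxa).1 z (Ne.symm hxz) hza
      rw [this]; exact step z hza

/-- **Theorem 1 of the paper.**  Let `n = |α|` and let `k ≠ k'` be two set sizes in
`[2, n]`, at least one of which lies in `{3, …, n-1}`.  If two CDM parameters `u, u'`
induce the same choice probabilities on every choice set of size `k` and on every choice
set of size `k'`, then `u'` is a constant shift of `u`:  there is `c ∈ ℝ` with
`u' x z = u x z + c` for all distinct `x, z`. -/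
theorem cdm_identifiable_from_two_sizes {α : Type*} [Fintype α] [DecidableEq α]
    (k k' : ℕ) (hk2 : 2 ≤ k) (hkn : k ≤ Fintype.card α)
    (hk'2 : 2 ≤ k') (hk'n : k' ≤ Fintype.card α) (hkk' : k ≠ k')
    (hmid : (3 ≤ k ∧ k ≤ Fintype.card α - 1) ∨ (3 ≤ k' ∧ k' ≤ Fintype.card α - 1))
    (u u' : α → α → ℝ)
    (h : ∀ C : Finset α, (C.card = k ∨ C.card = k') → ∀ x ∈ C,
      cdmProb u C x = cdmProb u' C x) :
    ∃ c : ℝ, ∀ x z : α, x ≠ z → u' x z = u x z + c := by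
  have key : ∀ C : Finset α, (C.card = k ∨ C.card = k') → ∀ x ∈ C, ∀ y ∈ C,
      ∑ z ∈ C.erase x, (u' x z - u x z) = ∑ z ∈ C.erase y, (u' y z - u y z) := by
    intro C hC x hx y hy
    have hCne : C.Nonempty := Finset.card_pos.mp (by rcases hC with h1 | h1 <;> omega)
    have hDu : (0:ℝ) < ∑ w ∈ C, Real.exp (∑ z ∈ C.erase w, u w z) :=
      Finset.sum_pos (fun _ _ => Real.exp_pos _) hCne
    have hDu' : (0:ℝ) < ∑ w ∈ C, Real.exp (∑ z ∈ C.erase w, u' w z) :=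
      Finset.sum_pos (fun _ _ => Real.exp_pos _) hCne
    have hx' := h C hC x hx
    have hy' := h C hC y hy
    unfold cdmProb at hx' hy'
    rw [div_eq_div_iff hDu.ne' hDu'.ne'] at hx' hy'
    have hEE : Real.exp (∑ z ∈ C.erase x, u x z) * Real.exp (∑ z ∈ C.erase y, u' y z)
        = Real.exp (∑ z ∈ C.erase y, u y z) * Real.exp (∑ z ∈ C.erase x, u' x z) := by
      apply mul_right_cancel₀ (mul_pos hDu' hDu).ne'
      calc Real.exp (∑ z ∈ C.erase x, u x z) * Real.exp (∑ z ∈ C.erase y, u' y z)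
            * ((∑ w ∈ C, Real.exp (∑ z ∈ C.erase w, u' w z))
              * (∑ w ∈ C, Real.exp (∑ z ∈ C.erase w, u w z)))
          = (Real.exp (∑ z ∈ C.erase x, u x z) * (∑ w ∈ C, Real.exp (∑ z ∈ C.erase w, u' w z)))
            * (Real.exp (∑ z ∈ C.erase y, u' y z) * (∑ w ∈ C, Real.exp (∑ z ∈ C.erase w, u w z))) := by
            ring
        _ = (Real.exp (∑ z ∈ C.erase x, u' x z) * (∑ w ∈ C, Real.exp (∑ z ∈ C.erase w, u w z)))
            * (Real.exp (∑ z ∈ C.erase y, u' y z) * (∑ w ∈ C, Real.exp (∑ z ∈ C.erase w, u w z))) := by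
            rw [hx']
        _ = (Real.exp (∑ z ∈ C.erase y, u' y z) * (∑ w ∈ C, Real.exp (∑ z ∈ C.erase w, u w z)))
            * (Real.exp (∑ z ∈ C.erase x, u' x z) * (∑ w ∈ C, Real.exp (∑ z ∈ C.erase w, u w z))) := by
            ring
        _ = (Real.exp (∑ z ∈ C.erase y, u y z) * (∑ w ∈ C, Real.exp (∑ z ∈ C.erase w, u' w z)))
            * (Real.exp (∑ z ∈ C.erase x, u' x z) * (∑ w ∈ C, Real.exp (∑ z ∈ C.erase w, u w z))) := by
            rw [hy']
        _ = Real.exp (∑ z ∈ C.erase y, u y z) * Real.exp (∑ z ∈ C.erase x, u' x z)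
            * ((∑ w ∈ C, Real.exp (∑ z ∈ C.erase w, u' w z))
              * (∑ w ∈ C, Real.exp (∑ z ∈ C.erase w, u w z))) := by
            ring
    rw [← Real.exp_add, ← Real.exp_add] at hEE
    have hsum := Real.exp_eq_exp.mp hEE
    rw [Finset.sum_sub_distrib, Finset.sum_sub_distrib]
    linarith
  rcases hmid with ⟨hm3, hmn⟩ | ⟨hm3, hmn⟩
  · obtain ⟨c, hc⟩ := cdm_aux k k' hm3 (by omega) hk'2 hk'n hkk'
      (fun x z => u' x z - u x z) key
    exact ⟨c, fun x z hxz => by have := hc x z hxz; linarith⟩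
  · obtain ⟨c, hc⟩ := cdm_aux k' k hm3 (by omega) hk2 hkn (Ne.symm hkk')
      (fun x z => u' x z - u x z)
      (fun C hC => key C (Or.symm hC))
    exact ⟨c, fun x z hxz => by have := hc x z hxz; linarith⟩
end

section
/- Fix a finite set X with n = |X| ≥ 3 and an integer s with 2 ≤ s ≤ n. For every CDM parameter u on X, there exists a CDM parameter u' on X such that u' − u is not constant (i.e., there is no c ∈ ℝ with u'_{xz} = u_{xz} + c for all distinct x, z), yet P_{u'}(x|C) = P_u(x|C) for every subset C ⊆ X with |C| = s and every x ∈ C. -/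
/-- **Theorem 2 of the paper (full-rank case).**  Let `n = |α| ≥ 3` and `2 ≤ s ≤ n`.
For every CDM parameter `u` there exists another CDM parameter `u'` which is *not* a
constant shift of `u`, yet induces exactly the same choice probabilities as `u` on every
choice set of size `s`.  Hence no CDM is identifiable from choices over sets of a single
size. -/
theorem cdm_not_identifiable_from_single_size {α : Type*} [Fintype α] [DecidableEq α]
    (hn : 3 ≤ Fintype.card α)
    (s : ℕ) (hs2 : 2 ≤ s) (hsn : s ≤ Fintype.card α)
    (u : α → α → ℝ) :
    ∃ u' : α → α → ℝ,
      (¬ ∃ c : ℝ, ∀ x z : α, x ≠ z → u' x z = u x z + c) ∧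
      (∀ C : Finset α, C.card = s → ∀ x ∈ C, cdmProb u' C x = cdmProb u C x) := by
  -- choose a base point a
  obtain ⟨a⟩ : Nonempty α := Fintype.card_pos_iff.mp (by omega)
  set g : α → ℝ := fun x => if x = a then 1 else 0 with hg
  refine ⟨fun x z => u x z + g x + ((s : ℝ) - 1) * g z, ?_, ?_⟩
  · rintro ⟨c, hc⟩
    -- find two distinct elements different from a
    have h2 : 1 < (Finset.univ.erase a).card := by
      have := Finset.card_erase_of_mem (Finset.mem_univ a)
      simp only [Finset.card_univ] at this
      omega
    obtain ⟨x, hx, z, hz, hxz⟩ := Finset.one_lt_card.mp h2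
    have hxa := Finset.ne_of_mem_erase hx
    have hza := Finset.ne_of_mem_erase hz
    have h0 := hc x z hxz
    have h1 := hc a z (Ne.symm hza)
    simp only [hg, if_pos rfl, if_neg hxa, if_neg hza] at h0 h1
    -- h0 : c = 0, h1 : c = 1
    have : c = 0 := by linarith
    have : c = 1 := by linarith
    linarith
  · intro C hC x hx
    have key : ∀ y ∈ C, ∑ z ∈ C.erase y, (u y z + g y + ((s : ℝ) - 1) * g z)
        = (∑ z ∈ C.erase y, u y z) + ((s : ℝ) - 1) * ∑ z ∈ C, g z := by
      intro y hy
      rw [Finset.sum_add_distrib, Finset.sum_add_distrib, Finset.sum_const,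
        Finset.card_erase_of_mem hy, hC, ← Finset.mul_sum,
        ← Finset.add_sum_erase _ g hy]
      have hs1 : (1 : ℕ) ≤ s := by omega
      rw [nsmul_eq_mul, Nat.cast_sub hs1]
      push_cast
      ring
    unfold cdmProb
    rw [key x hx, Real.exp_add]
    have : ∀ y ∈ C, Real.exp (∑ z ∈ C.erase y, (u y z + g y + ((s : ℝ) - 1) * g z))
        = Real.exp (∑ z ∈ C.erase y, u y z) * Real.exp (((s : ℝ) - 1) * ∑ z ∈ C, g z) := by
      intro y hy
      rw [key y hy, Real.exp_add]
    rw [Finset.sum_congr rfl this, ← Finset.sum_mul,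
      mul_div_mul_right _ _ (Real.exp_pos _).ne']
end

section
/- Fix a finite set X with n = |X| ≥ 2. Let u be a CDM parameter on X, let g ∈ ℝ, and let A be a real-valued function on ordered pairs of distinct elements of X such that Σ_{z∈X, z≠x} A_{xz} = g for every x ∈ X (all off-diagonal row sums equal g). Define u' by u'_{xz} = u_{xz} + A_{xz}. Then for every x ∈ X, P_{u'}(x|X) = P_u(x|X), i.e., the choice probabilities on the full universe X are unchanged. -/
/-- **Case (ii), `s = n`, in the proof of Theorem 2.**  Perturbing a CDM parameter `u`
by a matrix `A` all of whose off-diagonal row sums equal the same constant `g`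
(i.e. `∑_{z≠x} A x z = g` for every `x`) leaves the choice probabilities on the full
universe unchanged. -/
theorem cdm_equal_rowsum_perturbation_universe {α : Type*} [Fintype α] [DecidableEq α]
    (hn : 2 ≤ Fintype.card α)
    (u A u' : α → α → ℝ) (g : ℝ)
    (hA : ∀ x : α, ∑ z ∈ Finset.univ.erase x, A x z = g)
    (hu' : ∀ x z : α, x ≠ z → u' x z = u x z + A x z) :
    ∀ x : α, cdmProb u' Finset.univ x = cdmProb u Finset.univ x := by
  have key : ∀ y : α, ∑ z ∈ Finset.univ.erase y, u' y z
      = (∑ z ∈ Finset.univ.erase y, u y z) + g := by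
    intro y
    rw [← hA y, ← Finset.sum_add_distrib]
    refine Finset.sum_congr rfl fun z hz => ?_
    exact hu' y z (Ne.symm (Finset.ne_of_mem_erase hz))
  intro x
  unfold cdmProb
  rw [key x, Real.exp_add]
  have hden : ∀ y ∈ (Finset.univ : Finset α),
      Real.exp (∑ z ∈ Finset.univ.erase y, u' y z)
        = Real.exp (∑ z ∈ Finset.univ.erase y, u y z) * Real.exp g := fun y _ => by
    rw [key y, Real.exp_add]
  rw [Finset.sum_congr rfl hden, ← Finset.sum_mul,
    mul_div_mul_right _ _ (Real.exp_ne_zero g)]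
end

section
/- Fix a finite set X with n = |X|, an integer s with 2 ≤ s ≤ n, and a function a : X → ℝ. Let u be a CDM parameter on X and define u' by u'_{xz} = u_{xz} + a(x) + (s−1)·a(z) for all distinct x, z ∈ X. Then for every subset C ⊆ X with |C| = s and every x ∈ C, P_{u'}(x|C) = P_u(x|C). -/
/-- **Case (iii) in the proof of Theorem 2, made precise.**  Fix a set size `s` with
`2 ≤ s ≤ n` and any function `a : α → ℝ`.  Perturbing a CDM parameter `u` by
`u' x z = u x z + a x + (s-1)·a z` (for distinct `x, z`) leaves all choice probabilities
over sets of size `s` unchanged. -/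
theorem cdm_single_size_perturbation_family {α : Type*} [Fintype α] [DecidableEq α]
    (s : ℕ) (hs2 : 2 ≤ s) (hsn : s ≤ Fintype.card α)
    (a : α → ℝ) (u u' : α → α → ℝ)
    (hu' : ∀ x z : α, x ≠ z → u' x z = u x z + a x + ((s : ℝ) - 1) * a z) :
    ∀ C : Finset α, C.card = s → ∀ x ∈ C, cdmProb u' C x = cdmProb u C x := by
  intro C hC x hx
  set K : ℝ := ((s : ℝ) - 1) * ∑ z ∈ C, a z with hK
  -- each item's utility sum shifts by the common constant K
  have key : ∀ y ∈ C, (∑ z ∈ C.erase y, u' y z) = (∑ z ∈ C.erase y, u y z) + K := by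
    intro y hy
    have hsum : ∀ z ∈ C.erase y, u' y z = u y z + a y + ((s : ℝ) - 1) * a z := by
      intro z hz
      exact hu' y z (Finset.ne_of_mem_erase hz).symm
    rw [Finset.sum_congr rfl hsum]
    have hcard : (C.erase y).card = s - 1 := by rw [Finset.card_erase_of_mem hy, hC]
    have hcast : ((C.erase y).card : ℝ) = (s : ℝ) - 1 := by
      rw [hcard]
      have : (1 : ℕ) ≤ s := le_trans (by norm_num) hs2
      push_cast [Nat.cast_sub this]
      ring
    rw [Finset.sum_add_distrib, Finset.sum_add_distrib, Finset.sum_const, ← Finset.mul_sum]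
    have hCa : ∑ z ∈ C, a z = a y + ∑ z ∈ C.erase y, a z := by
      rw [Finset.add_sum_erase C a hy]
    rw [hK, hCa, nsmul_eq_mul, hcast]
    ring
  unfold cdmProb
  rw [key x hx, Real.exp_add]
  have hden : ∑ y ∈ C, Real.exp (∑ z ∈ C.erase y, u' y z)
      = (∑ y ∈ C, Real.exp (∑ z ∈ C.erase y, u y z)) * Real.exp K := by
    rw [Finset.sum_mul]
    exact Finset.sum_congr rfl fun y hy => by rw [key y hy, Real.exp_add]
  rw [hden, mul_div_mul_right _ _ (Real.exp_ne_zero K)]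
end

section
/- Fix a finite set X. For a real-valued function w on ordered pairs of distinct elements of X, a subset C ⊆ X with |C| ≥ 2, and x ∈ C, define g_{x,C}(w) = Σ_{y∈C, y≠x} [ (w_{xy} − w_{yx}) + Σ_{z∈C, z∉{x,y}} (w_{xz} − w_{yz}) ]. Let 𝒞 be a collection of subsets of X, each of size at least 2, and let u, u' be CDM parameters on X. Then the following are equivalent: (a) P_u(x|C) = P_{u'}(x|C) for every C ∈ 𝒞 and every x ∈ C; (b) the difference w = u − u' satisfies g_{x,C}(w) = 0 for every C ∈ 𝒞 and every x ∈ C. Consequently, the CDM is identifiable up to a constant shift from the choice probabilities over 𝒞 if and only if the only functions w with g_{x,C}(w) = 0 for all C ∈ 𝒞 and x ∈ C are the constant functions. -/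
/-- The design-matrix linear functional of the paper:
`g_{x,C}(w) = ∑_{y∈C, y≠x} [ (w x y - w y x) + ∑_{z∈C, z∉{x,y}} (w x z - w y z) ]`. -/
def cdmDesign {α : Type*} [DecidableEq α] (w : α → α → ℝ) (C : Finset α) (x : α) : ℝ :=
  ∑ y ∈ C.erase x, ((w x y - w y x) + ∑ z ∈ (C.erase x).erase y, (w x z - w y z))

/-- Row sum `S_w(x) = ∑_{z ∈ C \ {x}} w x z`. -/
def cdmS {α : Type*} [DecidableEq α] (w : α → α → ℝ) (C : Finset α) (x : α) : ℝ :=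
  ∑ z ∈ C.erase x, w x z

lemma cdmDesign_eq {α : Type*} [DecidableEq α] (w : α → α → ℝ) (C : Finset α) {x : α}
    (hx : x ∈ C) :
    cdmDesign w C x = C.card * cdmS w C x - ∑ y ∈ C, cdmS w C y := by
  have h1 : ∀ y ∈ C.erase x,
      ((w x y - w y x) + ∑ z ∈ (C.erase x).erase y, (w x z - w y z))
        = cdmS w C x - cdmS w C y := by
    intro y hy
    have hyx : y ≠ x := Finset.ne_of_mem_erase hy
    have hx' : x ∈ C.erase y := Finset.mem_erase.mpr ⟨hyx.symm, hx⟩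
    have hA : cdmS w C x = w x y + ∑ z ∈ (C.erase x).erase y, w x z := by
      rw [cdmS, ← Finset.add_sum_erase _ _ hy]
    have hB : cdmS w C y = w y x + ∑ z ∈ (C.erase x).erase y, w y z := by
      rw [cdmS, ← Finset.add_sum_erase _ _ hx', Finset.erase_right_comm]
    rw [Finset.sum_sub_distrib, hA, hB]; ring
  rw [cdmDesign, Finset.sum_congr rfl h1, Finset.sum_sub_distrib, Finset.sum_const,
    Finset.sum_erase_eq_sub hx, Finset.card_erase_of_mem hx, nsmul_eq_mul,
    Nat.cast_sub (Finset.card_pos.mpr ⟨x, hx⟩)]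
  push_cast
  ring

lemma cdm_per_set {α : Type*} [DecidableEq α] (C : Finset α) (hC : 2 ≤ C.card)
    (u u' : α → α → ℝ) :
    (∀ x ∈ C, cdmProb u C x = cdmProb u' C x) ↔
      (∀ x ∈ C, cdmDesign (fun a b => u a b - u' a b) C x = 0) := by
  set w : α → α → ℝ := fun a b => u a b - u' a b with hw
  have hSw : ∀ x, cdmS w C x = cdmS u C x - cdmS u' C x := by
    intro x; simp [cdmS, hw, Finset.sum_sub_distrib]
  have hne : C.Nonempty := Finset.card_pos.mp (by omega)
  have hZu : 0 < ∑ y ∈ C, Real.exp (∑ z ∈ C.erase y, u y z) :=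
    Finset.sum_pos (fun y _ => Real.exp_pos _) hne
  have hZu' : 0 < ∑ y ∈ C, Real.exp (∑ z ∈ C.erase y, u' y z) :=
    Finset.sum_pos (fun y _ => Real.exp_pos _) hne
  have hc0 : (0:ℝ) < (C.card : ℝ) := by
    exact_mod_cast Nat.lt_of_lt_of_le Nat.zero_lt_two hC
  constructor
  · intro h
    have key : ∀ x ∈ C, cdmS w C x =
        Real.log ((∑ y ∈ C, Real.exp (∑ z ∈ C.erase y, u y z)) /
          (∑ y ∈ C, Real.exp (∑ z ∈ C.erase y, u' y z))) := by
      intro x hx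
      have h1 := h x hx
      rw [cdmProb, cdmProb, div_eq_div_iff hZu.ne' hZu'.ne'] at h1
      have h2 : Real.exp (cdmS w C x) =
          (∑ y ∈ C, Real.exp (∑ z ∈ C.erase y, u y z)) /
            (∑ y ∈ C, Real.exp (∑ z ∈ C.erase y, u' y z)) := by
        rw [hSw, Real.exp_sub, cdmS, cdmS,
          div_eq_div_iff (Real.exp_pos _).ne' hZu'.ne']
        linarith [h1]
      rw [← h2, Real.log_exp]
    intro x hx
    rw [cdmDesign_eq w C hx, Finset.sum_congr rfl key, key x hx,
      Finset.sum_const, nsmul_eq_mul]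
    ring
  · intro h
    have key : ∀ x ∈ C, cdmS w C x = (∑ y ∈ C, cdmS w C y) / C.card := by
      intro x hx
      have h1 := h x hx
      rw [cdmDesign_eq w C hx, sub_eq_zero] at h1
      rw [eq_div_iff hc0.ne']
      linarith [h1]
    set c := (∑ y ∈ C, cdmS w C y) / C.card with hcdef
    have hexp : ∀ x ∈ C, Real.exp (∑ z ∈ C.erase x, u x z) =
        Real.exp c * Real.exp (∑ z ∈ C.erase x, u' x z) := by
      intro x hx
      rw [← Real.exp_add]
      congr 1
      have h2 := key x hx
      rw [hSw, cdmS, cdmS] at h2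
      linarith
    intro x hx
    rw [cdmProb, cdmProb, hexp x hx, Finset.sum_congr rfl hexp, ← Finset.mul_sum,
      mul_div_mul_left _ _ (Real.exp_ne_zero c)]

/-- **Lemma 2 / Theorem 4 of the paper (rank condition).**  For a collection `𝒞` of
choice sets of size at least two and CDM parameters `u, u'`:
(a) the choice probabilities of `u` and `u'` agree on all sets of `𝒞` iff
(b) the difference `w = u - u'` satisfies `g_{x,C}(w) = 0` for every `C ∈ 𝒞`, `x ∈ C`.
Consequently, the CDM is identifiable up to a constant shift from the choice
probabilities over `𝒞` iff the only functions annihilated by all the `g_{x,C}` are the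
constants. -/
theorem cdm_design_characterization {α : Type*} [Fintype α] [DecidableEq α]
    (𝒞 : Set (Finset α)) (h𝒞 : ∀ C ∈ 𝒞, 2 ≤ C.card)
    (u u' : α → α → ℝ) :
    ((∀ C ∈ 𝒞, ∀ x ∈ C, cdmProb u C x = cdmProb u' C x) ↔
      (∀ C ∈ 𝒞, ∀ x ∈ C, cdmDesign (fun a b => u a b - u' a b) C x = 0)) ∧
    ((∀ w w' : α → α → ℝ,
        (∀ C ∈ 𝒞, ∀ x ∈ C, cdmProb w C x = cdmProb w' C x) →
        ∃ c : ℝ, ∀ x z : α, x ≠ z → w x z = w' x z + c) ↔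
      (∀ w : α → α → ℝ,
        (∀ C ∈ 𝒞, ∀ x ∈ C, cdmDesign w C x = 0) →
        ∃ c : ℝ, ∀ x z : α, x ≠ z → w x z = c)) := by
  have per : ∀ (v v' : α → α → ℝ),
      (∀ C ∈ 𝒞, ∀ x ∈ C, cdmProb v C x = cdmProb v' C x) ↔
        (∀ C ∈ 𝒞, ∀ x ∈ C, cdmDesign (fun a b => v a b - v' a b) C x = 0) := by
    intro v v'
    constructor
    · intro h C hC; exact (cdm_per_set C (h𝒞 C hC) v v').mp (h C hC)
    · intro h C hC; exact (cdm_per_set C (h𝒞 C hC) v v').mpr (h C hC)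
  refine ⟨per u u', ?_, ?_⟩
  · intro H w hw
    have h0 : ∀ C ∈ 𝒞, ∀ x ∈ C, cdmDesign (fun a b => w a b - (0:ℝ)) C x = 0 := by
      simpa using hw
    have := H w (fun _ _ => 0) ((per w (fun _ _ => 0)).mpr h0)
    simpa using this
  · intro H w w' h
    obtain ⟨c, hc⟩ := H (fun a b => w a b - w' a b) ((per w w').mp h)
    exact ⟨c, fun x z hxz => by linarith [hc x z hxz]⟩
end

section
/- Let d be a positive integer, L a real symmetric positive semidefinite d×d matrix whose null space is exactly the span of the all-ones vector 𝟙, and P a real d×d matrix satisfying the Penrose conditions L·P·L = L, P·L·P = P, (L·P)ᵀ = L·P, (P·L)ᵀ = P·L. Let λ₂ > 0 be the smallest eigenvalue of L restricted to the orthogonal complement of 𝟙 (i.e., λ₂ = min{wᵀLw : ‖w‖₂ = 1, 𝟙ᵀw = 0}). Let ℓ : ℝ^d → ℝ be differentiable, let β > 0, and let û, u* ∈ ℝ^d with Δ = û − u* satisfying: (i) ℓ(û) ≤ ℓ(u*); (ii) β·ΔᵀLΔ ≤ ℓ(û) − ℓ(u*) − ∇ℓ(u*)ᵀΔ; and (iii)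 𝟙ᵀΔ = 0. Then ΔᵀLΔ ≤ (1/β²)·∇ℓ(u*)ᵀ P ∇ℓ(u*), and consequently ‖Δ‖₂² ≤ (1/(λ₂ β²))·∇ℓ(u*)ᵀ P ∇ℓ(u*). -/
open Matrix

/-! Since `ker L = span 𝟙` and `𝟙ᵀΔ = 0`, the projection `PL` fixes `Δ`, so `gᵀΔ = (Pg)ᵀLΔ`, and
Cauchy–Schwarz for the semi-inner product `(x, y) ↦ xᵀLy` gives `(gᵀΔ)² ≤ (gᵀPg)(ΔᵀLΔ)`: the
seminorm `‖·‖_{L†}` is dual to `‖·‖_L`. Conditions (i) and (ii) give `β‖Δ‖_L² ≤ -gᵀΔ`, hence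
`β²‖Δ‖_L⁴ ≤ ‖g‖_{L†}²‖Δ‖_L²`. Finally `λ₂‖Δ‖₂² ≤ ‖Δ‖_L²` because `Δ ⊥ 𝟙`. -/

namespace Matrix

variable {m n R : Type*} [Fintype m] [Fintype n]

section CommRing

variable [CommRing R]

structure IsPenroseInverse (A : Matrix m n R) (X : Matrix n m R) : Prop where
  penrose₁ : A * X * A = A
  penrose₂ : X * A * X = X
  penrose₃ : (A * X)ᵀ = A * X
  penrose₄ : (X * A)ᵀ = X * A

variable {A : Matrix m n R} {X Y : Matrix n m R}

theorem IsPenroseInverse.transpose (h : IsPenroseInverse A X) : IsPenroseInverse Aᵀ Xᵀ where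
  penrose₁ := by rw [← transpose_mul, ← transpose_mul, ← Matrix.mul_assoc, h.penrose₁]
  penrose₂ := by rw [← transpose_mul, ← transpose_mul, ← Matrix.mul_assoc, h.penrose₂]
  penrose₃ := by rw [← transpose_mul, h.penrose₄, h.penrose₄]
  penrose₄ := by rw [← transpose_mul, h.penrose₃, h.penrose₃]

theorem IsPenroseInverse.eq_mul_mul (hX : IsPenroseInverse A X) (hY : IsPenroseInverse A Y) :
    X = X * A * Y :=
  calc X = X * (A * X)ᵀ := by rw [hX.penrose₃, ← Matrix.mul_assoc, hX.penrose₂]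
    _ = X * (A * Y * (A * X))ᵀ := by rw [← Matrix.mul_assoc, hY.penrose₁]
    _ = X * (A * X) * (A * Y) := by
      rw [transpose_mul, hX.penrose₃, hY.penrose₃, ← Matrix.mul_assoc]
    _ = X * A * Y := by rw [← Matrix.mul_assoc X A X, hX.penrose₂, Matrix.mul_assoc]

theorem IsPenroseInverse.unique (hX : IsPenroseInverse A X) (hY : IsPenroseInverse A Y) :
    X = Y := by
  have hYt := hY.transpose.eq_mul_mul hX.transpose
  rw [← transpose_mul, ← transpose_mul, transpose_inj] at hYt
  calc X = X * A * Y := hX.eq_mul_mul hY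
    _ = Y := by rw [Matrix.mul_assoc, ← hYt]

theorem IsPenroseInverse.transpose_eq_self {A X : Matrix n n R} (h : IsPenroseInverse A X)
    (hA : A.IsSymm) : Xᵀ = X :=
  (hA.eq ▸ h.transpose).unique h

theorem IsPenroseInverse.mulVec_dotProduct_mulVec {A X : Matrix n n R}
    (h : IsPenroseInverse A X) (hA : A.IsSymm) (g : n → R) :
    (X *ᵥ g) ⬝ᵥ A *ᵥ (X *ᵥ g) = g ⬝ᵥ X *ᵥ g := by
  rw [dotProduct_comm, dotProduct_mulVec, ← mulVec_transpose, h.transpose_eq_self hA,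
    mulVec_mulVec, mulVec_mulVec, h.penrose₂, dotProduct_comm]

end CommRing

section Ordered

variable [CommRing R] [LinearOrder R] [IsStrictOrderedRing R] {A : Matrix m n R}
  {X : Matrix n m R}

theorem IsPenroseInverse.mul_mulVec_eq_self (h : IsPenroseInverse A X) {v : n → R}
    (hv : ∀ w, A *ᵥ w = 0 → w ⬝ᵥ v = 0) : (X * A) *ᵥ v = v := by
  -- `r ∈ ker A`, and `XA` is symmetric and kills `ker A`, so `r ⬝ᵥ r = r ⬝ᵥ v = 0`.
  set r := v - (X * A) *ᵥ v
  have hr : A *ᵥ r = 0 := by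
    rw [mulVec_sub, mulVec_mulVec, ← Matrix.mul_assoc, h.penrose₁, sub_self]
  have hrr : r ⬝ᵥ r = 0 := by
    rw [dotProduct_sub, dotProduct_mulVec, ← mulVec_transpose, h.penrose₄, ← mulVec_mulVec, hr,
      mulVec_zero, zero_dotProduct, sub_zero, hv r hr]
  rw [eq_comm, ← sub_eq_zero]
  exact dotProduct_self_eq_zero.mp hrr

end Ordered

theorem PosSemidef.sq_dotProduct_mulVec_le {L : Matrix n n ℝ} (hL : L.PosSemidef) (x y : n → ℝ) :
    (x ⬝ᵥ L *ᵥ y) ^ 2 ≤ (x ⬝ᵥ L *ᵥ x) * (y ⬝ᵥ L *ᵥ y) := by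
  let := L.toSeminormedAddCommGroup hL
  let := L.toInnerProductSpace hL
  have h := real_inner_mul_inner_self_le x y
  change (L *ᵥ y ⬝ᵥ star x) * (L *ᵥ y ⬝ᵥ star x) ≤ (L *ᵥ x ⬝ᵥ star x) * (L *ᵥ y ⬝ᵥ star y) at h
  simpa only [star_trivial, sq, dotProduct_comm (L *ᵥ _)] using h

variable {L P : Matrix n n ℝ}

theorem IsPenroseInverse.posSemidef (hL : L.PosSemidef) (hP : IsPenroseInverse L P) :
    P.PosSemidef := by
  have hLsymm := isHermitian_iff_isSymm.mp hL.isHermitian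
  refine .of_dotProduct_mulVec_nonneg (isHermitian_iff_isSymm.mpr (hP.transpose_eq_self hLsymm))
    fun g ↦ ?_
  rw [star_trivial, ← hP.mulVec_dotProduct_mulVec hLsymm]
  simpa only [star_trivial] using hL.dotProduct_mulVec_nonneg (P *ᵥ g)

theorem IsPenroseInverse.sq_dotProduct_le (hL : L.PosSemidef) (hP : IsPenroseInverse L P)
    {v : n → ℝ} (hv : ∀ w, L *ᵥ w = 0 → w ⬝ᵥ v = 0) (g : n → ℝ) :
    (g ⬝ᵥ v) ^ 2 ≤ (g ⬝ᵥ P *ᵥ g) * (v ⬝ᵥ L *ᵥ v) := by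
  have hLsymm := isHermitian_iff_isSymm.mp hL.isHermitian
  have hgv : g ⬝ᵥ v = (P *ᵥ g) ⬝ᵥ L *ᵥ v := by
    conv_lhs => rw [← hP.mul_mulVec_eq_self hv]
    rw [← mulVec_mulVec, dotProduct_mulVec, ← mulVec_transpose, hP.transpose_eq_self hLsymm]
  rw [hgv, ← hP.mulVec_dotProduct_mulVec hLsymm]
  exact hL.sq_dotProduct_mulVec_le _ _

theorem mul_sum_sq_le_dotProduct_mulVec {lam : ℝ}
    (hlam : lam ∈ lowerBounds
      {r : ℝ | ∃ w : n → ℝ, (∑ i, w i ^ 2) = 1 ∧ (∑ i, w i) = 0 ∧ r = w ⬝ᵥ L *ᵥ w})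
    {v : n → ℝ} (hv : ∑ i, v i = 0) : lam * ∑ i, v i ^ 2 ≤ v ⬝ᵥ L *ᵥ v := by
  obtain hs | hs := (Finset.sum_nonneg fun i _ ↦ sq_nonneg (v i)).eq_or_lt
  · have hv0 : v = 0 := dotProduct_self_eq_zero.mp (by simpa [dotProduct, sq] using hs.symm)
    simp [hv0]
  set c := (√(∑ i, v i ^ 2))⁻¹
  have hc : c ^ 2 * ∑ i, v i ^ 2 = 1 := by
    rw [inv_pow, Real.sq_sqrt hs.le, inv_mul_cancel₀ hs.ne']
  have hmem := hlam ⟨c • v, by simpa [mul_pow, ← Finset.mul_sum] using hc,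
    by simp [← Finset.mul_sum, hv], rfl⟩
  simp only [mulVec_smul, dotProduct_smul, smul_dotProduct, smul_eq_mul] at hmem
  calc lam * ∑ i, v i ^ 2 ≤ c * (c * (v ⬝ᵥ L *ᵥ v)) * ∑ i, v i ^ 2 :=
        mul_le_mul_of_nonneg_right hmem hs.le
    _ = v ⬝ᵥ L *ᵥ v := by linear_combination (v ⬝ᵥ L *ᵥ v) * hc

end Matrix

theorem le_div_sq_of_mul_le_neg_of_sq_le {β t x G : ℝ} (hβ : 0 < β) (ht : 0 ≤ t) (hG : 0 ≤ G)
    (hopt : β * t ≤ -x) (hx : x ^ 2 ≤ G * t) : t ≤ G / β ^ 2 := by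
  rw [le_div_iff₀ (by positivity)]
  obtain rfl | ht := ht.eq_or_lt
  · simpa using hG
  have hβt : (β * t) ^ 2 ≤ x ^ 2 := by
    simpa only [neg_sq] using pow_le_pow_left₀ (by positivity) hopt 2
  exact le_of_mul_le_mul_right (by nlinarith) ht

theorem mle_seminorm_error_bound_general (d : ℕ)
    (L P : Matrix (Fin d) (Fin d) ℝ)
    (hL : L.PosSemidef)
    (hnull : ∀ w : Fin d → ℝ, L.mulVec w = 0 ↔ ∃ c : ℝ, ∀ i, w i = c)
    (hP1 : L * P * L = L) (hP2 : P * L * P = P)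
    (hP3 : (L * P)ᵀ = L * P) (hP4 : (P * L)ᵀ = P * L)
    (lam : ℝ) (hlam_pos : 0 < lam)
    (hlam : IsLeast
      {r : ℝ | ∃ w : Fin d → ℝ, (∑ i, w i ^ 2) = 1 ∧ (∑ i, w i) = 0 ∧
        r = w ⬝ᵥ L.mulVec w} lam)
    (ℓ : (Fin d → ℝ) → ℝ) (β : ℝ) (hβ : 0 < β)
    (uhat ustar g : Fin d → ℝ)
    (h1 : ℓ uhat ≤ ℓ ustar)
    (h2 : β * ((uhat - ustar) ⬝ᵥ L.mulVec (uhat - ustar)) ≤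
      ℓ uhat - ℓ ustar - g ⬝ᵥ (uhat - ustar))
    (h3 : ∑ i, (uhat i - ustar i) = 0) :
    (uhat - ustar) ⬝ᵥ L.mulVec (uhat - ustar) ≤ (1 / β ^ 2) * (g ⬝ᵥ P.mulVec g) ∧
    (∑ i, (uhat i - ustar i) ^ 2) ≤ (1 / (lam * β ^ 2)) * (g ⬝ᵥ P.mulVec g) := by
  have hP : IsPenroseInverse L P := ⟨hP1, hP2, hP3, hP4⟩
  set Δ := uhat - ustar
  have hΔ : ∀ w, L *ᵥ w = 0 → w ⬝ᵥ Δ = 0 := fun w hw ↦ by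
    obtain ⟨c, hc⟩ := (hnull w).mp hw
    simp [dotProduct, hc, ← Finset.mul_sum, Δ, h3]
  have hdual := hP.sq_dotProduct_le hL hΔ g
  have hΔ_nonneg : 0 ≤ Δ ⬝ᵥ L *ᵥ Δ := by simpa using hL.dotProduct_mulVec_nonneg Δ
  have hg_nonneg : 0 ≤ g ⬝ᵥ P *ᵥ g := by simpa using (hP.posSemidef hL).dotProduct_mulVec_nonneg g
  have hseminorm : Δ ⬝ᵥ L *ᵥ Δ ≤ (g ⬝ᵥ P *ᵥ g) / β ^ 2 :=
    le_div_sq_of_mul_le_neg_of_sq_le hβ hΔ_nonneg hg_nonneg (by linarith) hdual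
  have hgap := mul_sum_sq_le_dotProduct_mulVec (v := Δ) hlam.2 h3
  refine ⟨by rwa [one_div_mul_eq_div], ?_⟩
  calc ∑ i, Δ i ^ 2 ≤ (Δ ⬝ᵥ L *ᵥ Δ) / lam := by rwa [le_div_iff₀' hlam_pos]
    _ ≤ (g ⬝ᵥ P *ᵥ g) / β ^ 2 / lam := by gcongr
    _ = 1 / (lam * β ^ 2) * (g ⬝ᵥ P *ᵥ g) := by field_simp

/-- **Deterministic core of the proof of Theorem 3.**  Let `L` be a symmetric positive
semidefinite `d × d` matrix whose null space is exactly the span of the all-ones vector,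
`P` its Moore–Penrose pseudoinverse (characterized by the Penrose conditions), and
`lam > 0` the minimum of the quadratic form `w ↦ wᵀLw` over unit vectors `w ⊥ 𝟙`.
Let `ℓ` be differentiable at `ustar` with gradient `g`, let `β > 0`, and suppose
`Δ = uhat - ustar` satisfies (i) `ℓ(uhat) ≤ ℓ(ustar)`,
(ii) `β·ΔᵀLΔ ≤ ℓ(uhat) - ℓ(ustar) - gᵀΔ` (strong convexity in the `L` seminorm), and
(iii) `𝟙ᵀΔ = 0`.  Then `ΔᵀLΔ ≤ (1/β²)·gᵀPg` and `‖Δ‖₂² ≤ (1/(lam·β²))·gᵀPg`. -/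
theorem mle_seminorm_error_bound (d : ℕ) (hd : 0 < d)
    (L P : Matrix (Fin d) (Fin d) ℝ)
    (hL : L.PosSemidef)
    (hnull : ∀ w : Fin d → ℝ, L.mulVec w = 0 ↔ ∃ c : ℝ, ∀ i, w i = c)
    (hP1 : L * P * L = L) (hP2 : P * L * P = P)
    (hP3 : (L * P)ᵀ = L * P) (hP4 : (P * L)ᵀ = P * L)
    (lam : ℝ) (hlam_pos : 0 < lam)
    (hlam : IsLeast
      {r : ℝ | ∃ w : Fin d → ℝ, (∑ i, w i ^ 2) = 1 ∧ (∑ i, w i) = 0 ∧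
        r = w ⬝ᵥ L.mulVec w} lam)
    (ℓ : (Fin d → ℝ) → ℝ) (β : ℝ) (hβ : 0 < β)
    (uhat ustar g : Fin d → ℝ)
    (hdiff : DifferentiableAt ℝ ℓ ustar)
    (hg : ∀ v : Fin d → ℝ, fderiv ℝ ℓ ustar v = g ⬝ᵥ v)
    (h1 : ℓ uhat ≤ ℓ ustar)
    (h2 : β * ((uhat - ustar) ⬝ᵥ L.mulVec (uhat - ustar)) ≤
      ℓ uhat - ℓ ustar - g ⬝ᵥ (uhat - ustar))
    (h3 : ∑ i, (uhat i - ustar i) = 0) :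
    (uhat - ustar) ⬝ᵥ L.mulVec (uhat - ustar) ≤ (1 / β ^ 2) * (g ⬝ᵥ P.mulVec g) ∧
    (∑ i, (uhat i - ustar i) ^ 2) ≤ (1 / (lam * β ^ 2)) * (g ⬝ᵥ P.mulVec g) :=
  mle_seminorm_error_bound_general d L P hL hnull hP1 hP2 hP3 hP4 lam hlam_pos hlam ℓ β hβ uhat
    ustar g h1 h2 h3
end
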